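/- arXiv:2403.16773 — 2 statements merged into one kernel-verified Lean document; each statement's English description precedes it below -/
import Mathlib

section
/- The expected ρ-derivative of the noisy-covariate negative log-likelihood at the true parameter equals the explicit bias term: E[∂L*/∂ρ (θ0)] = λ² λx² (β02ᵀ β02) tr(Ω0⁻¹ W S0ᵀ Ω0⁻¹). -/
/-!
At the true `ρ0` the score is `tr(S0⁻¹ W) - (λ²/2) tr(Ω0⁻¹ 𝕎S0) - (W Y*)ᵀ Ω0⁻¹ r
+ (λ²/2) rᵀ Ω0⁻¹ 𝕎S0 Ω0⁻¹ r`, where the residual `r = S0 Y* - X* β0 = E + S0 ε - Ex β02` and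
`W Y* = W S0⁻¹ (X β0 + E) + W ε` are affine in the independent centred noise `(E, ε, Ex)`.
Taking expectations turns both quadratic forms into traces against the noise covariance:
`Cov(W Y*, r) = W S0⁻¹ Ω0` cancels the `log det S` term, and `Cov(r) = Ω0 + λx² |β02|² I`
cancels the `log det Ω` term, leaving only `(λ²/2) λx² |β02|² tr(Ω0⁻¹ 𝕎S0 Ω0⁻¹)`, which is
the claimed bias because `tr(Ω0⁻¹ S0 Wᵀ Ω0⁻¹) = tr(Ω0⁻¹ W S0ᵀ Ω0⁻¹)`.
-/

open MeasureTheory ProbabilityTheory Matrix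
open scoped Matrix

namespace PSAR
/-- `S(ρ) = I_N − ρ W`. -/
noncomputable def Smat {N : ℕ} (W : Matrix (Fin N) (Fin N) ℝ) (ρ : ℝ) :
    Matrix (Fin N) (Fin N) ℝ :=
  1 - ρ • W

/-- `Ω(ρ, σ²) = σ² I_N + λ² S(ρ) S(ρ)ᵀ`. -/
noncomputable def Omat {N : ℕ} (W : Matrix (Fin N) (Fin N) ℝ) (lam2 ρ σ2 : ℝ) :
    Matrix (Fin N) (Fin N) ℝ :=
  σ2 • (1 : Matrix (Fin N) (Fin N) ℝ) + lam2 • (Smat W ρ * (Smat W ρ)ᵀ)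

/-- `𝕎S(ρ) = W S(ρ)ᵀ + S(ρ) Wᵀ`. -/
noncomputable def WSmat {N : ℕ} (W : Matrix (Fin N) (Fin N) ℝ) (ρ : ℝ) :
    Matrix (Fin N) (Fin N) ℝ :=
  W * (Smat W ρ)ᵀ + Smat W ρ * Wᵀ

/-- `𝕎(ρ) = Wᵀ S(ρ) + S(ρ)ᵀ W` (least squares version). -/
noncomputable def WLSmat {N : ℕ} (W : Matrix (Fin N) (Fin N) ℝ) (ρ : ℝ) :
    Matrix (Fin N) (Fin N) ℝ :=
  Wᵀ * Smat W ρ + (Smat W ρ)ᵀ * W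

/-- The negative log-likelihood
`L(θ) = −log det S(ρ) + (1/2) log det Ω(ρ,σ²) + (1/2)(S(ρ)Ys − Xβ)ᵀ Ω(ρ,σ²)⁻¹ (S(ρ)Ys − Xβ)`. -/
noncomputable def nll {N p1 p2 : ℕ} (W : Matrix (Fin N) (Fin N) ℝ) (lam2 : ℝ)
    (X : Matrix (Fin N) (Fin p1 ⊕ Fin p2) ℝ) (Ys : Fin N → ℝ)
    (ρ : ℝ) (β : Fin p1 ⊕ Fin p2 → ℝ) (σ2 : ℝ) : ℝ :=
  - Real.log (Smat W ρ).det + (1 / 2) * Real.log (Omat W lam2 ρ σ2).det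
    + (1 / 2) * ((Smat W ρ *ᵥ Ys - X *ᵥ β) ⬝ᵥ
        ((Omat W lam2 ρ σ2)⁻¹ *ᵥ (Smat W ρ *ᵥ Ys - X *ᵥ β)))

/-- Diagonal matrix `d(ρ)` with `d(ρ)_{ii} = 1/(S(ρ)ᵀ S(ρ))_{ii}`. -/
noncomputable def dmat {N : ℕ} (W : Matrix (Fin N) (Fin N) ℝ) (ρ : ℝ) :
    Matrix (Fin N) (Fin N) ℝ :=
  Matrix.diagonal fun i => ((((Smat W ρ)ᵀ * Smat W ρ) i i)⁻¹)

/-- Entrywise first derivative `ḋ(ρ)` of `d(ρ)` in `ρ`. -/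
noncomputable def dmatDot {N : ℕ} (W : Matrix (Fin N) (Fin N) ℝ) (ρ : ℝ) :
    Matrix (Fin N) (Fin N) ℝ :=
  Matrix.diagonal fun i => deriv (fun r => ((((Smat W r)ᵀ * Smat W r) i i)⁻¹)) ρ

/-- Entrywise second derivative `d̈(ρ)` of `d(ρ)` in `ρ`. -/
noncomputable def dmatDDot {N : ℕ} (W : Matrix (Fin N) (Fin N) ℝ) (ρ : ℝ) :
    Matrix (Fin N) (Fin N) ℝ :=
  Matrix.diagonal fun i => deriv (deriv (fun r => ((((Smat W r)ᵀ * Smat W r) i i)⁻¹))) ρ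

/-- Least squares objective `L_LS(γ) = ‖d(ρ) S(ρ)ᵀ (S(ρ)Y − Xβ)‖²`. -/
noncomputable def lsObj {N p1 p2 : ℕ} (W : Matrix (Fin N) (Fin N) ℝ)
    (X : Matrix (Fin N) (Fin p1 ⊕ Fin p2) ℝ) (Y : Fin N → ℝ)
    (ρ : ℝ) (β : Fin p1 ⊕ Fin p2 → ℝ) : ℝ :=
  ((dmat W ρ * (Smat W ρ)ᵀ) *ᵥ (Smat W ρ *ᵥ Y - X *ᵥ β)) ⬝ᵥ
    ((dmat W ρ * (Smat W ρ)ᵀ) *ᵥ (Smat W ρ *ᵥ Y - X *ᵥ β))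

/-- Observed response `Y* = S0⁻¹(Xβ0 + E) + ε`. -/
noncomputable def Yobs {N p1 p2 : ℕ} (W : Matrix (Fin N) (Fin N) ℝ) (ρ0 : ℝ)
    (X : Matrix (Fin N) (Fin p1 ⊕ Fin p2) ℝ) (β0 : Fin p1 ⊕ Fin p2 → ℝ)
    (E ε : Fin N → ℝ) : Fin N → ℝ :=
  (Smat W ρ0)⁻¹ *ᵥ (X *ᵥ β0 + E) + ε

/-- True response `Y = S0⁻¹(Xβ0 + E)`. -/
noncomputable def Ytrue {N p1 p2 : ℕ} (W : Matrix (Fin N) (Fin N) ℝ) (ρ0 : ℝ)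
    (X : Matrix (Fin N) (Fin p1 ⊕ Fin p2) ℝ) (β0 : Fin p1 ⊕ Fin p2 → ℝ)
    (E : Fin N → ℝ) : Fin N → ℝ :=
  (Smat W ρ0)⁻¹ *ᵥ (X *ᵥ β0 + E)

/-- Observed covariates `X* = (X1, X2 + Ex)`. -/
noncomputable def Xobs {N p1 p2 : ℕ} (X : Matrix (Fin N) (Fin p1 ⊕ Fin p2) ℝ)
    (Ex : Fin N → Fin p2 → ℝ) : Matrix (Fin N) (Fin p1 ⊕ Fin p2) ℝ :=
  X + Matrix.of fun i j => Sum.elim (fun _ => (0 : ℝ)) (fun k => Ex i k) j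

/-- All the noise entries of `E`, `ε`, `Ex` gathered as a single family. -/
def noiseFam {Ωs : Type*} {N p2 : ℕ} (E ε : Ωs → Fin N → ℝ)
    (Ex : Ωs → Fin N → Fin p2 → ℝ) :
    (Fin N ⊕ Fin N ⊕ Fin N × Fin p2) → Ωs → ℝ :=
  fun z ω => Sum.elim (fun i => E ω i) (Sum.elim (fun i => ε ω i) (fun q => Ex ω q.1 q.2)) z

section Calculus

variable {n : Type*} [Fintype n] {M : ℝ → Matrix n n ℝ} {M' : Matrix n n ℝ} {x : ℝ}

theorem dotProduct_mulVec_comm {A : Matrix n n ℝ} (hA : Aᵀ = A) (u v : n → ℝ) :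
    u ⬝ᵥ (A *ᵥ v) = v ⬝ᵥ (A *ᵥ u) := by
  rw [dotProduct_mulVec, ← mulVec_transpose, hA, dotProduct_comm]

theorem hasDerivAt_mul_apply {A : ℝ → Matrix n n ℝ} {A' : Matrix n n ℝ}
    (hA : ∀ i j, HasDerivAt (fun ρ => A ρ i j) (A' i j) x)
    (hM : ∀ i j, HasDerivAt (fun ρ => M ρ i j) (M' i j) x) (i j : n) :
    HasDerivAt (fun ρ => (A ρ * M ρ) i j) ((A' * M x + A x * M') i j) x := by
  simp only [mul_apply, Matrix.add_apply, ← Finset.sum_add_distrib]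
  exact HasDerivAt.fun_sum fun k _ => (hA i k).mul (hM k j)

theorem hasDerivAt_dotProduct_mulVec {r : ℝ → n → ℝ} {r' : n → ℝ}
    (hr : ∀ i, HasDerivAt (fun ρ => r ρ i) (r' i) x)
    (hM : ∀ i j, HasDerivAt (fun ρ => M ρ i j) (M' i j) x) :
    HasDerivAt (fun ρ => r ρ ⬝ᵥ (M ρ *ᵥ r ρ))
      (r' ⬝ᵥ (M x *ᵥ r x) + r x ⬝ᵥ (M' *ᵥ r x) + r x ⬝ᵥ (M x *ᵥ r')) x := by
  have H := HasDerivAt.fun_sum (u := Finset.univ) fun i _ => (hr i).mul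
    (HasDerivAt.fun_sum (u := Finset.univ) fun j _ => (hM i j).mul (hr j))
  refine H.congr_deriv ?_
  simp only [dotProduct, mulVec, Pi.mul_apply, Finset.sum_add_distrib, Finset.mul_sum, mul_add]
  ring

variable [DecidableEq n]

/-- The Leibniz expansion behind Jacobi's formula `d (det M) = tr (adj M * dM)`. -/
theorem trace_adjugate_mul (A B : Matrix n n ℝ) :
    (A.adjugate * B).trace = ∑ σ : Equiv.Perm n, (Equiv.Perm.sign σ : ℝ) *
      ∑ i, (∏ j ∈ Finset.univ.erase i, A (σ j) j) * B (σ i) i := by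
  have hcol : ∀ i, (A.adjugate * B) i i = (A.updateCol i (fun k => B k i)).det := by
    intro i
    rw [← cramer_apply, cramer_eq_adjugate_mulVec]
    simp [mulVec, mul_apply, dotProduct]
  simp only [trace, diag, hcol, det_apply', Finset.mul_sum]
  rw [Finset.sum_comm]
  refine Finset.sum_congr rfl fun σ _ => Finset.sum_congr rfl fun i _ => ?_
  rw [← Finset.mul_prod_erase _ _ (Finset.mem_univ i), Finset.prod_congr rfl fun j hj =>
    show A.updateCol i (fun k => B k i) (σ j) j = A (σ j) j by
      simp [Finset.ne_of_mem_erase hj]]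
  simp only [updateCol_self]
  ring

theorem hasDerivAt_det (h : ∀ i j, HasDerivAt (fun ρ => M ρ i j) (M' i j) x) :
    HasDerivAt (fun ρ => (M ρ).det) ((M x).adjugate * M').trace x := by
  rw [trace_adjugate_mul]
  simp only [det_apply']
  refine HasDerivAt.fun_sum fun σ _ => HasDerivAt.const_mul _ ?_
  simpa using HasDerivAt.fun_finsetProd (u := Finset.univ) (f := fun i ρ => M ρ (σ i) i)
    (fun i _ => h (σ i) i)

theorem hasDerivAt_log_det (h : ∀ i j, HasDerivAt (fun ρ => M ρ i j) (M' i j) x)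
    (hdet : (M x).det ≠ 0) :
    HasDerivAt (fun ρ => Real.log (M ρ).det) ((M x)⁻¹ * M').trace x := by
  convert (hasDerivAt_det h).log hdet using 1
  rw [inv_def, Ring.inverse_eq_inv', smul_mul, trace_smul, smul_eq_mul, inv_mul_eq_div]

theorem differentiableAt_inv_apply (h : ∀ i j, DifferentiableAt ℝ (fun ρ => M ρ i j) x)
    (hdet : (M x).det ≠ 0) (i j : n) : DifferentiableAt ℝ (fun ρ => (M ρ)⁻¹ i j) x := by
  have hdet_diff : ∀ A : ℝ → Matrix n n ℝ, (∀ i j, DifferentiableAt ℝ (fun ρ => A ρ i j) x) →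
      DifferentiableAt ℝ (fun ρ => (A ρ).det) x := fun A hA =>
    (hasDerivAt_det fun i j => (hA i j).hasDerivAt).differentiableAt
  simp only [inv_def, Ring.inverse_eq_inv', Matrix.smul_apply, smul_eq_mul]
  simp only [adjugate_apply]
  refine ((hdet_diff M h).inv hdet).mul (hdet_diff _ fun k l => ?_)
  by_cases hk : k = j
  · simp [hk]
  · simpa [hk] using h k l

theorem hasDerivAt_inv_apply (h : ∀ i j, HasDerivAt (fun ρ => M ρ i j) (M' i j) x)
    (hdet : (M x).det ≠ 0) (i j : n) :
    HasDerivAt (fun ρ => (M ρ)⁻¹ i j) (-((M x)⁻¹ * M' * (M x)⁻¹) i j) x := by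
  set G : Matrix n n ℝ := of fun i j => deriv (fun ρ => (M ρ)⁻¹ i j) x
  have hG : ∀ i j, HasDerivAt (fun ρ => (M ρ)⁻¹ i j) (G i j) x := fun i j =>
    (differentiableAt_inv_apply (fun i j => (h i j).differentiableAt) hdet i j).hasDerivAt
  -- `(M ρ)⁻¹ * M ρ = 1` near `x`, so its derivative vanishes
  have hzero : G * M x + (M x)⁻¹ * M' = 0 := by
    ext a b
    have hdet_near : ∀ᶠ ρ in nhds x, (M ρ).det ≠ 0 :=
      (hasDerivAt_det h).continuousAt.eventually_ne hdet
    have hconst : (fun ρ => ((M ρ)⁻¹ * M ρ) a b) =ᶠ[nhds x] fun _ => (1 : Matrix n n ℝ) a b := by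
      filter_upwards [hdet_near] with ρ hρ
      rw [nonsing_inv_mul _ hρ.isUnit]
    exact (hasDerivAt_mul_apply hG h a b).unique
      ((hasDerivAt_const x _).congr_of_eventuallyEq hconst)
  have hG_eq : G = -((M x)⁻¹ * M' * (M x)⁻¹) := by
    calc G = G * M x * (M x)⁻¹ := by
          rw [Matrix.mul_assoc, mul_nonsing_inv _ hdet.isUnit, Matrix.mul_one]
      _ = -((M x)⁻¹ * M' * (M x)⁻¹) := by
          rw [eq_neg_of_add_eq_zero_left hzero, Matrix.neg_mul]
  simpa [hG_eq] using hG i j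

end Calculus

section Moments

variable {Ωs : Type*} [MeasurableSpace Ωs] {μ : Measure Ωs} {ι n : Type*}

theorem integral_mul_eq_diagonal [DecidableEq ι] [IsProbabilityMeasure μ] {ζ : ι → Ωs → ℝ}
    (hindep : iIndepFun ζ μ) (hmeas : ∀ z, AEStronglyMeasurable (ζ z) μ)
    (hmean : ∀ z, ∫ ω, ζ z ω ∂μ = 0) (z w : ι) :
    ∫ ω, ζ z ω * ζ w ω ∂μ = diagonal (fun z => ∫ ω, ζ z ω ^ 2 ∂μ) z w := by
  by_cases hzw : z = w
  · subst hzw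
    simp [sq]
  · rw [diagonal_apply_ne _ hzw, (hindep.indepFun hzw).integral_fun_mul_eq_mul_integral
      (hmeas z) (hmeas w), hmean z, zero_mul]

variable [Fintype ι] [Fintype n]

theorem dotProduct_affine_eq (c d : n → ℝ) (A C : Matrix n ι ℝ) (x : ι → ℝ) :
    (c + A *ᵥ x) ⬝ᵥ (d + C *ᵥ x)
      = c ⬝ᵥ d + ((c ᵥ* C + d ᵥ* A) ⬝ᵥ x + ∑ z, ∑ w, (Aᵀ * C) z w * (x z * x w)) := by
  have hquad : (A *ᵥ x) ⬝ᵥ (C *ᵥ x) = ∑ z, ∑ w, (Aᵀ * C) z w * (x z * x w) := by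
    rw [dotProduct_comm, dotProduct_mulVec, ← mulVec_transpose, mulVec_mulVec]
    simp only [dotProduct, mulVec, Finset.sum_mul]
    exact Finset.sum_congr rfl fun z _ => Finset.sum_congr rfl fun w _ => by ring
  rw [add_dotProduct, dotProduct_add, dotProduct_add, hquad, dotProduct_mulVec,
    dotProduct_comm (A *ᵥ x), dotProduct_mulVec, add_dotProduct]
  ring

theorem trace_mul_mul_transpose (A C : Matrix n ι ℝ) (K : Matrix ι ι ℝ) :
    (A * K * Cᵀ).trace = ∑ z, ∑ w, (Aᵀ * C) z w * K z w := by
  rw [trace_mul_cycle, show Cᵀ * A = (Aᵀ * C)ᵀ by rw [transpose_mul, transpose_transpose]]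
  simp only [trace, diag, mul_apply, transpose_apply]
  exact Finset.sum_comm

variable {ξ : Ωs → ι → ℝ} {K : Matrix ι ι ℝ}

theorem integrable_sum_mul_of_memLp (hL2 : ∀ z, MemLp (fun ω => ξ ω z) 2 μ)
    (G : Matrix ι ι ℝ) : Integrable (fun ω => ∑ z, ∑ w, G z w * (ξ ω z * ξ ω w)) μ :=
  integrable_finsetSum _ fun z _ => integrable_finsetSum _ fun w _ =>
    ((hL2 z).integrable_mul (hL2 w)).const_mul _

variable [IsProbabilityMeasure μ]

theorem integrable_dotProduct_of_memLp (hL2 : ∀ z, MemLp (fun ω => ξ ω z) 2 μ) (u : ι → ℝ) :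
    Integrable (fun ω => u ⬝ᵥ ξ ω) μ :=
  integrable_finsetSum _ fun z _ => ((hL2 z).integrable one_le_two).const_mul _

theorem integrable_dotProduct_affine (hL2 : ∀ z, MemLp (fun ω => ξ ω z) 2 μ) (c d : n → ℝ)
    (A C : Matrix n ι ℝ) :
    Integrable (fun ω => (c + A *ᵥ ξ ω) ⬝ᵥ (d + C *ᵥ ξ ω)) μ := by
  simp only [dotProduct_affine_eq]
  exact (integrable_const _).add
    ((integrable_dotProduct_of_memLp hL2 _).add (integrable_sum_mul_of_memLp hL2 _))

theorem integral_dotProduct_affine (hL2 : ∀ z, MemLp (fun ω => ξ ω z) 2 μ)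
    (hmean : ∀ z, ∫ ω, ξ ω z ∂μ = 0) (hcov : ∀ z w, ∫ ω, ξ ω z * ξ ω w ∂μ = K z w)
    (c d : n → ℝ) (A C : Matrix n ι ℝ) :
    ∫ ω, (c + A *ᵥ ξ ω) ⬝ᵥ (d + C *ᵥ ξ ω) ∂μ = c ⬝ᵥ d + (A * K * Cᵀ).trace := by
  have hlin : ∀ u : ι → ℝ, ∫ ω, u ⬝ᵥ ξ ω ∂μ = 0 := fun u => by
    simp only [dotProduct]
    rw [integral_finsetSum _ fun z _ => ((hL2 z).integrable one_le_two).const_mul _]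
    simp [integral_const_mul, hmean]
  have hquad : ∀ G : Matrix ι ι ℝ,
      ∫ ω, ∑ z, ∑ w, G z w * (ξ ω z * ξ ω w) ∂μ = ∑ z, ∑ w, G z w * K z w := fun G => by
    have hprod : ∀ z w, Integrable (fun ω => G z w * (ξ ω z * ξ ω w)) μ := fun z w =>
      ((hL2 z).integrable_mul (hL2 w)).const_mul _
    rw [integral_finsetSum (f := fun z ω => ∑ w, G z w * (ξ ω z * ξ ω w)) _
      fun z _ => integrable_finsetSum _ fun w _ => hprod z w]
    refine Finset.sum_congr rfl fun z _ => ?_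
    rw [integral_finsetSum (f := fun w ω => G z w * (ξ ω z * ξ ω w)) _ fun w _ => hprod z w]
    simp only [integral_const_mul, hcov]
  simp only [dotProduct_affine_eq]
  rw [integral_add (integrable_const _)
      ((integrable_dotProduct_of_memLp hL2 _).fun_add (integrable_sum_mul_of_memLp hL2 _)),
    integral_const, integral_add (integrable_dotProduct_of_memLp hL2 _)
      (integrable_sum_mul_of_memLp hL2 _), hlin, hquad, trace_mul_mul_transpose]
  simp

end Moments

section Model

variable {N p1 p2 : ℕ} (W : Matrix (Fin N) (Fin N) ℝ)

theorem hasDerivAt_Smat_apply (ρ : ℝ) (i j : Fin N) :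
    HasDerivAt (fun r => Smat W r i j) (-W i j) ρ := by
  simpa [Smat] using ((hasDerivAt_id ρ).mul_const (W i j)).const_sub ((1 : Matrix _ _ ℝ) i j)

theorem hasDerivAt_Omat_apply (lam2 σ2 ρ : ℝ) (i j : Fin N) :
    HasDerivAt (fun r => Omat W lam2 r σ2 i j) (-(lam2 • WSmat W ρ) i j) ρ := by
  have hSS := hasDerivAt_mul_apply (A' := -W) (hasDerivAt_Smat_apply W ρ)
    (M := fun r => (Smat W r)ᵀ) (M' := -Wᵀ) (fun i j => hasDerivAt_Smat_apply W ρ j i) i j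
  have hΩ : (fun r => Omat W lam2 r σ2 i j) = fun r =>
      σ2 * (1 : Matrix (Fin N) (Fin N) ℝ) i j + lam2 * (Smat W r * (Smat W r)ᵀ) i j := by
    funext r
    simp [Omat]
  rw [hΩ]
  refine ((hSS.const_mul lam2).const_add _).congr_deriv ?_
  simp [WSmat]
  ring

theorem Omat_transpose (lam2 ρ σ2 : ℝ) : (Omat W lam2 ρ σ2)ᵀ = Omat W lam2 ρ σ2 := by
  simp [Omat, transpose_add, transpose_smul, transpose_mul]

theorem Omat_posDef {lam2 σ2 : ℝ} (hlam : 0 ≤ lam2) (hσ : 0 < σ2) (ρ : ℝ) :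
    (Omat W lam2 ρ σ2).PosDef := by
  have h := (posSemidef_self_mul_conjTranspose (Smat W ρ)).smul hlam
  rw [conjTranspose_eq_transpose_of_trivial] at h
  exact (PosDef.one.smul hσ).add_posSemidef h

theorem WSmat_transpose (ρ : ℝ) : (WSmat W ρ)ᵀ = WSmat W ρ := by
  rw [WSmat, transpose_add, transpose_mul, transpose_mul, transpose_transpose,
    transpose_transpose, add_comm]

theorem trace_mul_WSmat_mul (ρ : ℝ) {P : Matrix (Fin N) (Fin N) ℝ} (hP : Pᵀ = P) :
    (P * WSmat W ρ * P).trace = 2 * (P * W * (Smat W ρ)ᵀ * P).trace := by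
  have hswap : (P * (Smat W ρ * Wᵀ) * P).trace = (P * W * (Smat W ρ)ᵀ * P).trace := by
    rw [← trace_transpose]
    simp only [transpose_mul, transpose_transpose, hP, Matrix.mul_assoc]
  rw [WSmat, Matrix.mul_add, Matrix.add_mul, trace_add, hswap, Matrix.mul_assoc P W]
  ring

theorem hasDerivAt_nll (lam2 : ℝ) (Xs : Matrix (Fin N) (Fin p1 ⊕ Fin p2) ℝ) (Ys : Fin N → ℝ)
    (β : Fin p1 ⊕ Fin p2 → ℝ) {ρ σ2 : ℝ} (hlam : 0 ≤ lam2) (hσ : 0 < σ2)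
    (hS : (Smat W ρ).det ≠ 0) :
    HasDerivAt (fun r => nll W lam2 Xs Ys r β σ2)
      (((Smat W ρ)⁻¹ * W).trace - lam2 / 2 * ((Omat W lam2 ρ σ2)⁻¹ * WSmat W ρ).trace
        + (-(W *ᵥ Ys)) ⬝ᵥ ((Omat W lam2 ρ σ2)⁻¹ *ᵥ (Smat W ρ *ᵥ Ys - Xs *ᵥ β))
        + lam2 / 2 * ((Smat W ρ *ᵥ Ys - Xs *ᵥ β) ⬝ᵥ
            (((Omat W lam2 ρ σ2)⁻¹ * WSmat W ρ * (Omat W lam2 ρ σ2)⁻¹) *ᵥ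
              (Smat W ρ *ᵥ Ys - Xs *ᵥ β)))) ρ := by
  have hΩ : (Omat W lam2 ρ σ2).det ≠ 0 := (Omat_posDef W hlam hσ ρ).det_pos.ne'
  have hΩinv : ((Omat W lam2 ρ σ2)⁻¹)ᵀ = (Omat W lam2 ρ σ2)⁻¹ := by
    rw [transpose_nonsing_inv, Omat_transpose]
  have hres : ∀ i, HasDerivAt (fun r => (Smat W r *ᵥ Ys - Xs *ᵥ β) i) (-(W *ᵥ Ys) i) ρ := by
    intro i
    simp only [Pi.sub_apply, mulVec, dotProduct, ← Finset.sum_neg_distrib, ← neg_mul]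
    exact (HasDerivAt.fun_sum fun j _ => (hasDerivAt_Smat_apply W ρ i j).mul_const _).sub_const _
  have hlogS := (hasDerivAt_log_det (M' := -W) (hasDerivAt_Smat_apply W ρ) hS).neg
  have hlogΩ := (hasDerivAt_log_det (M' := -(lam2 • WSmat W ρ))
    (hasDerivAt_Omat_apply W lam2 σ2 ρ) hΩ).const_mul (1 / 2)
  have hquad := (hasDerivAt_dotProduct_mulVec (r' := -(W *ᵥ Ys))
    (M' := -((Omat W lam2 ρ σ2)⁻¹ * -(lam2 • WSmat W ρ) * (Omat W lam2 ρ σ2)⁻¹)) hres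
    (hasDerivAt_inv_apply (M' := -(lam2 • WSmat W ρ)) (hasDerivAt_Omat_apply W lam2 σ2 ρ) hΩ)
    ).const_mul (1 / 2)
  refine ((hlogS.add hlogΩ).add hquad).congr_deriv ?_
  rw [dotProduct_mulVec_comm hΩinv (Smat W ρ *ᵥ Ys - Xs *ᵥ β)]
  simp only [Matrix.mul_neg, Matrix.neg_mul, trace_neg, Matrix.mul_smul, Matrix.smul_mul,
    trace_smul, neg_neg, smul_mulVec, dotProduct_smul, smul_eq_mul]
  ring

end Model

section Noise

variable {N p1 p2 : ℕ}

theorem fromCols_mul_diagonal_mul_transpose {m n₁ n₂ : Type*} [Fintype n₁] [Fintype n₂]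
    [DecidableEq n₁] [DecidableEq n₂] (A₁ B₁ : Matrix m n₁ ℝ) (A₂ B₂ : Matrix m n₂ ℝ)
    (v₁ : n₁ → ℝ) (v₂ : n₂ → ℝ) :
    fromCols A₁ A₂ * diagonal (Sum.elim v₁ v₂) * (fromCols B₁ B₂)ᵀ
      = A₁ * diagonal v₁ * B₁ᵀ + A₂ * diagonal v₂ * B₂ᵀ := by
  rw [← fromBlocks_diagonal, transpose_fromCols, fromCols_mul_fromBlocks, fromCols_mul_fromRows]
  simp

def errLoading (b : Fin p2 → ℝ) : Matrix (Fin N) (Fin N × Fin p2) ℝ :=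
  of fun i q => if q.1 = i then b q.2 else 0

theorem Xobs_mulVec (X : Matrix (Fin N) (Fin p1 ⊕ Fin p2) ℝ) (Ex : Fin N → Fin p2 → ℝ)
    (β : Fin p1 ⊕ Fin p2 → ℝ) :
    Xobs X Ex *ᵥ β = X *ᵥ β + errLoading (fun k => β (Sum.inr k)) *ᵥ fun q => Ex q.1 q.2 := by
  ext i
  simp [Xobs, mulVec, dotProduct, Fintype.sum_sum_type, Fintype.sum_prod_type, errLoading,
    mul_add, Finset.sum_add_distrib, mul_comm]

theorem errLoading_mul_transpose (b : Fin p2 → ℝ) :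
    errLoading (N := N) b * (errLoading (N := N) b)ᵀ
      = (∑ l, b l ^ 2) • (1 : Matrix (Fin N) (Fin N) ℝ) := by
  ext i j
  rw [Matrix.mul_apply, Fintype.sum_prod_type]
  by_cases hij : i = j
  · subst hij
    simp [errLoading, sq]
  · simp [errLoading, hij, Ne.symm hij]

/-- The noise `(E, ε, vec Ex)` as one vector, indexed as in `noiseFam`. -/
def noiseVec (e ε : Fin N → ℝ) (ex : Fin N → Fin p2 → ℝ) : Fin N ⊕ Fin N ⊕ Fin N × Fin p2 → ℝ :=
  Sum.elim e (Sum.elim ε fun q => ex q.1 q.2)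

noncomputable def residualLoading (W : Matrix (Fin N) (Fin N) ℝ) (ρ : ℝ) (b : Fin p2 → ℝ) :
    Matrix (Fin N) (Fin N ⊕ Fin N ⊕ Fin N × Fin p2) ℝ :=
  fromCols 1 (fromCols (Smat W ρ) (-errLoading b))

-- The dimensions are explicit arguments: left implicit, `*` with these matrices would be
-- elaborated through the default `CStarMatrix` product instance.
noncomputable def responseLoading (p2 : ℕ) (W : Matrix (Fin N) (Fin N) ℝ) (ρ : ℝ) :
    Matrix (Fin N) (Fin N ⊕ Fin N ⊕ Fin N × Fin p2) ℝ :=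
  fromCols (W * (Smat W ρ)⁻¹) (fromCols W 0)

def noiseCov (N p2 : ℕ) (σ2 lam2 κ : ℝ) :
    Matrix (Fin N ⊕ Fin N ⊕ Fin N × Fin p2) (Fin N ⊕ Fin N ⊕ Fin N × Fin p2) ℝ :=
  diagonal (Sum.elim (fun _ => σ2) (Sum.elim (fun _ => lam2) fun _ => κ))

theorem residual_eq_residualLoading_mulVec (W : Matrix (Fin N) (Fin N) ℝ) {ρ : ℝ}
    (hS : (Smat W ρ).det ≠ 0) (X : Matrix (Fin N) (Fin p1 ⊕ Fin p2) ℝ)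
    (β : Fin p1 ⊕ Fin p2 → ℝ) (e ε : Fin N → ℝ) (ex : Fin N → Fin p2 → ℝ) :
    Smat W ρ *ᵥ Yobs W ρ X β e ε - Xobs X ex *ᵥ β
      = residualLoading W ρ (fun k => β (Sum.inr k)) *ᵥ noiseVec e ε ex := by
  rw [residualLoading, noiseVec, fromCols_mulVec_sumElim, fromCols_mulVec_sumElim, Yobs,
    mulVec_add, mulVec_mulVec, mul_nonsing_inv _ hS.isUnit, one_mulVec, one_mulVec, Xobs_mulVec,
    neg_mulVec]
  abel

theorem W_mulVec_Yobs (W : Matrix (Fin N) (Fin N) ℝ) (ρ : ℝ)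
    (X : Matrix (Fin N) (Fin p1 ⊕ Fin p2) ℝ) (β : Fin p1 ⊕ Fin p2 → ℝ) (e ε : Fin N → ℝ)
    (ex : Fin N → Fin p2 → ℝ) :
    W *ᵥ Yobs W ρ X β e ε
      = (W * (Smat W ρ)⁻¹) *ᵥ (X *ᵥ β) + responseLoading p2 W ρ *ᵥ noiseVec e ε ex := by
  simp only [responseLoading, noiseVec, fromCols_mulVec_sumElim, Yobs, zero_mulVec, add_zero,
    mulVec_add, mulVec_mulVec, Matrix.mul_assoc, add_assoc]

theorem integral_noiseFam_mul {Ωs : Type*} [MeasurableSpace Ωs] {μ : Measure Ωs}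
    [IsProbabilityMeasure μ] {E ε : Ωs → Fin N → ℝ} {Ex : Ωs → Fin N → Fin p2 → ℝ}
    {σ2 lam2 κ : ℝ} (hindep : iIndepFun (noiseFam E ε Ex) μ)
    (hmeas : ∀ z, AEStronglyMeasurable (noiseFam E ε Ex z) μ)
    (hmean : ∀ z, ∫ ω, noiseFam E ε Ex z ω ∂μ = 0)
    (hEvar : ∀ i, ∫ ω, (E ω i) ^ 2 ∂μ = σ2) (hepsvar : ∀ i, ∫ ω, (ε ω i) ^ 2 ∂μ = lam2)
    (hExvar : ∀ i j, ∫ ω, (Ex ω i j) ^ 2 ∂μ = κ) (z w : Fin N ⊕ Fin N ⊕ Fin N × Fin p2) :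
    ∫ ω, noiseFam E ε Ex z ω * noiseFam E ε Ex w ω ∂μ = noiseCov N p2 σ2 lam2 κ z w := by
  rw [integral_mul_eq_diagonal hindep hmeas hmean, noiseCov]
  congr 2
  funext z
  rcases z with i | i | q
  · exact hEvar i
  · exact hepsvar i
  · exact hExvar q.1 q.2

variable (W : Matrix (Fin N) (Fin N) ℝ) (ρ lam2 σ2 κ : ℝ) (b : Fin p2 → ℝ)

theorem residualLoading_noiseCov_transpose :
    residualLoading W ρ b * noiseCov N p2 σ2 lam2 κ * (residualLoading W ρ b)ᵀ
      = Omat W lam2 ρ σ2 + (κ * ∑ l, b l ^ 2) • (1 : Matrix (Fin N) (Fin N) ℝ) := by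
  rw [residualLoading, noiseCov, fromCols_mul_diagonal_mul_transpose,
    fromCols_mul_diagonal_mul_transpose]
  simp only [← smul_one_eq_diagonal, Matrix.mul_smul, Matrix.smul_mul, Matrix.mul_one,
    transpose_one, transpose_neg, Matrix.mul_neg, Matrix.neg_mul, errLoading_mul_transpose, Omat]
  module

theorem responseLoading_noiseCov_residualLoading (hS : (Smat W ρ).det ≠ 0) :
    responseLoading p2 W ρ * noiseCov N p2 σ2 lam2 κ * (residualLoading W ρ b)ᵀ
      = W * (Smat W ρ)⁻¹ * Omat W lam2 ρ σ2 := by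
  rw [residualLoading, responseLoading, noiseCov, fromCols_mul_diagonal_mul_transpose,
    fromCols_mul_diagonal_mul_transpose]
  simp only [← smul_one_eq_diagonal, Matrix.mul_smul, Matrix.smul_mul, Matrix.mul_one,
    transpose_one, Matrix.zero_mul, smul_zero, add_zero, Omat, Matrix.mul_add]
  rw [Matrix.mul_assoc, ← Matrix.mul_assoc _ (Smat W ρ), nonsing_inv_mul _ hS.isUnit,
    Matrix.one_mul]

end Noise

section Score

variable {N p1 p2 : ℕ} (W : Matrix (Fin N) (Fin N) ℝ) {ρ lam2 σ2 κ : ℝ}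

theorem deriv_nll_Yobs (hlam : 0 ≤ lam2) (hσ : 0 < σ2) (hS : (Smat W ρ).det ≠ 0)
    (X : Matrix (Fin N) (Fin p1 ⊕ Fin p2) ℝ) (β : Fin p1 ⊕ Fin p2 → ℝ) (e ε : Fin N → ℝ)
    (ex : Fin N → Fin p2 → ℝ) :
    deriv (fun r => nll W lam2 (Xobs X ex) (Yobs W ρ X β e ε) r β σ2) ρ
      = ((Smat W ρ)⁻¹ * W).trace - lam2 / 2 * ((Omat W lam2 ρ σ2)⁻¹ * WSmat W ρ).trace
        + (-((W * (Smat W ρ)⁻¹) *ᵥ (X *ᵥ β)) + -responseLoading p2 W ρ *ᵥ noiseVec e ε ex) ⬝ᵥ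
            ((Omat W lam2 ρ σ2)⁻¹ *ᵥ
              (residualLoading W ρ (fun k => β (Sum.inr k)) *ᵥ noiseVec e ε ex))
        + lam2 / 2 * ((residualLoading W ρ (fun k => β (Sum.inr k)) *ᵥ noiseVec e ε ex) ⬝ᵥ
            (((Omat W lam2 ρ σ2)⁻¹ * WSmat W ρ * (Omat W lam2 ρ σ2)⁻¹) *ᵥ
              (residualLoading W ρ (fun k => β (Sum.inr k)) *ᵥ noiseVec e ε ex))) := by
  rw [(hasDerivAt_nll W lam2 _ _ β hlam hσ hS).deriv, residual_eq_residualLoading_mulVec W hS,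
    W_mulVec_Yobs W ρ X β e ε ex, neg_add, neg_mulVec]

variable (b : Fin p2 → ℝ) {Ωs : Type*} [MeasurableSpace Ωs] {μ : Measure Ωs}
  [IsProbabilityMeasure μ] {ξ : Ωs → Fin N ⊕ Fin N ⊕ Fin N × Fin p2 → ℝ}

theorem integrable_score_cross_term (hL2 : ∀ z, MemLp (fun ω => ξ ω z) 2 μ) (c : Fin N → ℝ) :
    Integrable (fun ω => (c + -responseLoading p2 W ρ *ᵥ ξ ω) ⬝ᵥ
      ((Omat W lam2 ρ σ2)⁻¹ *ᵥ (residualLoading W ρ b *ᵥ ξ ω))) μ := by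
  simpa only [zero_add, mulVec_mulVec] using
    integrable_dotProduct_affine hL2 c 0 (-responseLoading p2 W ρ)
      ((Omat W lam2 ρ σ2)⁻¹ * residualLoading W ρ b)

theorem integrable_score_quad_term (hL2 : ∀ z, MemLp (fun ω => ξ ω z) 2 μ) :
    Integrable (fun ω => (residualLoading W ρ b *ᵥ ξ ω) ⬝ᵥ
      (((Omat W lam2 ρ σ2)⁻¹ * WSmat W ρ * (Omat W lam2 ρ σ2)⁻¹) *ᵥ
        (residualLoading W ρ b *ᵥ ξ ω))) μ := by
  simpa only [zero_add, mulVec_mulVec] using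
    integrable_dotProduct_affine hL2 0 0 (residualLoading W ρ b)
      ((Omat W lam2 ρ σ2)⁻¹ * WSmat W ρ * (Omat W lam2 ρ σ2)⁻¹ * residualLoading W ρ b)

theorem integral_score_cross_term (hL2 : ∀ z, MemLp (fun ω => ξ ω z) 2 μ)
    (hmean : ∀ z, ∫ ω, ξ ω z ∂μ = 0)
    (hcov : ∀ z w, ∫ ω, ξ ω z * ξ ω w ∂μ = noiseCov N p2 σ2 lam2 κ z w)
    (hlam : 0 ≤ lam2) (hσ : 0 < σ2) (hS : (Smat W ρ).det ≠ 0) (c : Fin N → ℝ) :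
    ∫ ω, (c + -responseLoading p2 W ρ *ᵥ ξ ω) ⬝ᵥ
        ((Omat W lam2 ρ σ2)⁻¹ *ᵥ (residualLoading W ρ b *ᵥ ξ ω)) ∂μ
      = -((Smat W ρ)⁻¹ * W).trace := by
  set Ω := Omat W lam2 ρ σ2
  have hΩ : Ω.det ≠ 0 := (Omat_posDef W hlam hσ ρ).det_pos.ne'
  have htrace : (-responseLoading p2 W ρ * noiseCov N p2 σ2 lam2 κ *
      (Ω⁻¹ * residualLoading W ρ b)ᵀ).trace = -((Smat W ρ)⁻¹ * W).trace := by
    rw [transpose_mul, transpose_nonsing_inv, Omat_transpose, Matrix.neg_mul, Matrix.neg_mul,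
      trace_neg, ← Matrix.mul_assoc, responseLoading_noiseCov_residualLoading W ρ lam2 σ2 κ b hS,
      Matrix.mul_assoc, mul_nonsing_inv _ hΩ.isUnit, Matrix.mul_one, trace_mul_comm]
  have h := integral_dotProduct_affine hL2 hmean hcov c 0 (-responseLoading p2 W ρ)
    (Ω⁻¹ * residualLoading W ρ b)
  rw [htrace, dotProduct_zero, zero_add] at h
  simpa only [zero_add, mulVec_mulVec] using h

theorem integral_score_quad_term (hL2 : ∀ z, MemLp (fun ω => ξ ω z) 2 μ)
    (hmean : ∀ z, ∫ ω, ξ ω z ∂μ = 0)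
    (hcov : ∀ z w, ∫ ω, ξ ω z * ξ ω w ∂μ = noiseCov N p2 σ2 lam2 κ z w)
    (hlam : 0 ≤ lam2) (hσ : 0 < σ2) :
    ∫ ω, (residualLoading W ρ b *ᵥ ξ ω) ⬝ᵥ
        (((Omat W lam2 ρ σ2)⁻¹ * WSmat W ρ * (Omat W lam2 ρ σ2)⁻¹) *ᵥ
          (residualLoading W ρ b *ᵥ ξ ω)) ∂μ
      = ((Omat W lam2 ρ σ2)⁻¹ * WSmat W ρ).trace + κ * (∑ l, b l ^ 2) *
          (2 * ((Omat W lam2 ρ σ2)⁻¹ * W * (Smat W ρ)ᵀ * (Omat W lam2 ρ σ2)⁻¹).trace) := by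
  set Ω := Omat W lam2 ρ σ2
  have hΩ : Ω.det ≠ 0 := (Omat_posDef W hlam hσ ρ).det_pos.ne'
  have hΩinv : (Ω⁻¹)ᵀ = Ω⁻¹ := by rw [transpose_nonsing_inv, Omat_transpose]
  have hsymm : (Ω⁻¹ * WSmat W ρ * Ω⁻¹)ᵀ = Ω⁻¹ * WSmat W ρ * Ω⁻¹ := by
    simp only [transpose_mul, hΩinv, WSmat_transpose, Matrix.mul_assoc]
  have hcancel : Ω * (Ω⁻¹ * WSmat W ρ * Ω⁻¹) = WSmat W ρ * Ω⁻¹ := by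
    rw [← Matrix.mul_assoc, ← Matrix.mul_assoc, mul_nonsing_inv _ hΩ.isUnit, Matrix.one_mul]
  have htrace : (residualLoading W ρ b * noiseCov N p2 σ2 lam2 κ *
      (Ω⁻¹ * WSmat W ρ * Ω⁻¹ * residualLoading W ρ b)ᵀ).trace
      = (Ω⁻¹ * WSmat W ρ).trace + κ * (∑ l, b l ^ 2) *
          (2 * (Ω⁻¹ * W * (Smat W ρ)ᵀ * Ω⁻¹).trace) := by
    rw [transpose_mul, hsymm, ← Matrix.mul_assoc, residualLoading_noiseCov_transpose,
      Matrix.add_mul, trace_add, Matrix.smul_mul, trace_smul, Matrix.one_mul,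
      trace_mul_WSmat_mul W ρ hΩinv, hcancel, trace_mul_comm, smul_eq_mul]
  have h := integral_dotProduct_affine hL2 hmean hcov 0 0 (residualLoading W ρ b)
    (Ω⁻¹ * WSmat W ρ * Ω⁻¹ * residualLoading W ρ b)
  rw [htrace, dotProduct_zero, zero_add] at h
  simpa only [zero_add, mulVec_mulVec] using h

end Score

theorem statement_1_general
    {Ωs : Type*} [MeasurableSpace Ωs] (μ : Measure Ωs) [IsProbabilityMeasure μ]
    (N p1 p2 : ℕ)
    (W : Matrix (Fin N) (Fin N) ℝ)
    (X : Matrix (Fin N) (Fin p1 ⊕ Fin p2) ℝ)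
    (ρ0 : ℝ) (β0 : Fin p1 ⊕ Fin p2 → ℝ) (σ02 lam2 lamx2 : ℝ)
    (hσ : 0 < σ02) (hlam : 0 < lam2)
    (hS0 : 0 < (Smat W ρ0).det)
    (E ε : Ωs → Fin N → ℝ) (Ex : Ωs → Fin N → Fin p2 → ℝ)
    (hindep : iIndepFun (noiseFam E ε Ex) μ)
    (hmom : ∀ z, MemLp (noiseFam E ε Ex z) 4 μ)
    (hmean : ∀ z, ∫ ω, noiseFam E ε Ex z ω ∂μ = 0)
    (hEvar : ∀ i, ∫ ω, (E ω i) ^ 2 ∂μ = σ02)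
    (hepsvar : ∀ i, ∫ ω, (ε ω i) ^ 2 ∂μ = lam2)
    (hExvar : ∀ i j, ∫ ω, (Ex ω i j) ^ 2 ∂μ = lamx2) :
    ∫ ω, deriv (fun ρ =>
        nll W lam2 (Xobs X (Ex ω)) (Yobs W ρ0 X β0 (E ω) (ε ω)) ρ β0 σ02) ρ0 ∂μ
      = lam2 * lamx2 * (∑ k, β0 (Sum.inr k) ^ 2) *
          Matrix.trace ((Omat W lam2 ρ0 σ02)⁻¹ * W * (Smat W ρ0)ᵀ * (Omat W lam2 ρ0 σ02)⁻¹)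
  := by
  -- `noiseFam E ε Ex z ω` is definitionally `noiseVec (E ω) (ε ω) (Ex ω) z`
  have hL2 : ∀ z, MemLp (fun ω => noiseVec (E ω) (ε ω) (Ex ω) z) 2 μ := fun z =>
    (hmom z).mono_exponent (by norm_num)
  have hcov := integral_noiseFam_mul hindep (fun z => (hL2 z).1) hmean hEvar hepsvar hExvar
  set b : Fin p2 → ℝ := fun k => β0 (Sum.inr k)
  have hcross := integrable_score_cross_term W b (ρ := ρ0) (lam2 := lam2) (σ2 := σ02) hL2
  have hquad := integrable_score_quad_term W b (ρ := ρ0) (lam2 := lam2) (σ2 := σ02) hL2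
  simp only [deriv_nll_Yobs W hlam.le hσ hS0.ne']
  rw [integral_add ((integrable_const _).fun_add (hcross _)) (hquad.const_mul _),
    integral_add (integrable_const _) (hcross _), integral_const, integral_const_mul,
    integral_score_cross_term W b hL2 hmean hcov hlam.le hσ hS0.ne',
    integral_score_quad_term W b hL2 hmean hcov hlam.le hσ, probReal_univ, one_smul]
  ring

theorem statement_1
    {Ωs : Type*} [MeasurableSpace Ωs] (μ : Measure Ωs) [IsProbabilityMeasure μ]
    (N p1 p2 : ℕ) (hN : 0 < N) (hp1 : 0 < p1) (hp2 : 0 < p2)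
    (W : Matrix (Fin N) (Fin N) ℝ) (hW : ∀ i, W i i = 0)
    (X : Matrix (Fin N) (Fin p1 ⊕ Fin p2) ℝ)
    (ρ0 : ℝ) (β0 : Fin p1 ⊕ Fin p2 → ℝ) (σ02 lam2 lamx2 : ℝ)
    (hσ : 0 < σ02) (hlam : 0 < lam2) (hlamx : 0 < lamx2)
    (hS0 : 0 < (Smat W ρ0).det)
    (E ε : Ωs → Fin N → ℝ) (Ex : Ωs → Fin N → Fin p2 → ℝ)
    (hindep : iIndepFun (noiseFam E ε Ex) μ)
    (hmom : ∀ z, MemLp (noiseFam E ε Ex z) 4 μ)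
    (hmean : ∀ z, ∫ ω, noiseFam E ε Ex z ω ∂μ = 0)
    (hEvar : ∀ i, ∫ ω, (E ω i) ^ 2 ∂μ = σ02)
    (hepsvar : ∀ i, ∫ ω, (ε ω i) ^ 2 ∂μ = lam2)
    (hExvar : ∀ i j, ∫ ω, (Ex ω i j) ^ 2 ∂μ = lamx2) :
    ∫ ω, deriv (fun ρ =>
        nll W lam2 (Xobs X (Ex ω)) (Yobs W ρ0 X β0 (E ω) (ε ω)) ρ β0 σ02) ρ0 ∂μ
      = lam2 * lamx2 * (∑ k, β0 (Sum.inr k) ^ 2) *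
          Matrix.trace ((Omat W lam2 ρ0 σ02)⁻¹ * W * (Smat W ρ0)ᵀ * (Omat W lam2 ρ0 σ02)⁻¹) :=
  statement_1_general μ N p1 p2 W X ρ0 β0 σ02 lam2 lamx2 hσ hlam hS0 E ε Ex hindep hmom hmean hEvar
    hepsvar hExvar

end PSAR
end

section
/- The difference of expected β-Hessians of the noisy- and true-covariate negative log-likelihoods at the true parameter is the explicit block-diagonal matrix: E[∂²L*/∂β∂βᵀ (θ0)] − E[∂²L/∂β∂βᵀ (θ0)] = blockdiag(0_{p1×p1}, λx² tr(Ω0⁻¹) I_{p2}). -/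
open MeasureTheory ProbabilityTheory Matrix
open scoped Matrix

/-! In `β` the negative log-likelihood is `½ (c - Xβ)ᵀ Ω⁻¹ (c - Xβ)` plus terms free of `β`, so its
`β`-Hessian is `Xᵀ Ω⁻¹ X` (`Ω` is symmetric), whatever the response. With `X* = X + Z` and `Z` of
mean zero the cross terms vanish in expectation, and
`E[Zᵀ Ω⁻¹ Z]_{jk} = ∑_{a,b} (Ω⁻¹)_{ab} E[Z_{aj} Z_{bk}]`. Independence leaves only `a = b` and
`j = k` in the second block, each term contributing `λx²`, which gives `λx² tr Ω⁻¹`. -/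

theorem deriv_sub_mul_add_mul_sq_zero (a b c : ℝ) :
    deriv (fun u : ℝ => a - b * u + c * u ^ 2) 0 = -b := by
  have h : HasDerivAt (fun u : ℝ => a - b * u + c * u ^ 2) (-(b * 1) + c * (2 * 0 ^ 1)) 0 :=
    (((hasDerivAt_id 0).const_mul b).const_sub a).add ((hasDerivAt_pow 2 0).const_mul c)
  simpa using h.deriv

section QuadraticForm

variable {n : Type*} [Fintype n] (M : Matrix n n ℝ)

theorem dotProduct_mulVec_sub_smul (w b : n → ℝ) (u : ℝ) :
    (w - u • b) ⬝ᵥ (M *ᵥ (w - u • b)) =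
      w ⬝ᵥ (M *ᵥ w) - (b ⬝ᵥ (M *ᵥ w) + w ⬝ᵥ (M *ᵥ b)) * u + b ⬝ᵥ (M *ᵥ b) * u ^ 2 := by
  simp only [mulVec_sub, mulVec_smul, dotProduct_sub, sub_dotProduct, dotProduct_smul,
    smul_dotProduct, smul_eq_mul]
  ring

theorem deriv_dotProduct_mulVec_sub_smul (w b : n → ℝ) :
    deriv (fun u : ℝ => (w - u • b) ⬝ᵥ (M *ᵥ (w - u • b))) 0 =
      -(b ⬝ᵥ (M *ᵥ w) + w ⬝ᵥ (M *ᵥ b)) := by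
  simp_rw [dotProduct_mulVec_sub_smul]
  exact deriv_sub_mul_add_mul_sq_zero _ _ _

theorem deriv_deriv_dotProduct_mulVec_sub_smul (c a b : n → ℝ) :
    deriv (fun t : ℝ => deriv (fun u : ℝ =>
        (c - t • a - u • b) ⬝ᵥ (M *ᵥ (c - t • a - u • b))) 0) 0 =
      a ⬝ᵥ (M *ᵥ b) + b ⬝ᵥ (M *ᵥ a) := by
  simp_rw [deriv_dotProduct_mulVec_sub_smul, mulVec_sub, mulVec_smul, dotProduct_sub,
    sub_dotProduct, dotProduct_smul, smul_dotProduct, smul_eq_mul]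
  simp [add_comm]

theorem Matrix.IsSymm.dotProduct_mulVec_comm {M : Matrix n n ℝ} (hM : M.IsSymm) (x y : n → ℝ) :
    x ⬝ᵥ (M *ᵥ y) = y ⬝ᵥ (M *ᵥ x) := by
  rw [dotProduct_mulVec, ← mulVec_transpose, hM.eq, dotProduct_comm]

theorem dotProduct_mulVec_eq_sum_sum (x y : n → ℝ) :
    x ⬝ᵥ (M *ᵥ y) = ∑ a, ∑ b, M a b * (x a * y b) := by
  simp only [dotProduct, mulVec, Finset.mul_sum]
  refine Finset.sum_congr rfl fun a _ => Finset.sum_congr rfl fun b _ => by ring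

end QuadraticForm

section Expectation

variable {Ω : Type*} [MeasurableSpace Ω] {μ : Measure Ω} [IsProbabilityMeasure μ]

theorem integral_add_mul_add {f g : Ω → ℝ} (hf : MemLp f 2 μ) (hg : MemLp g 2 μ)
    (hf0 : ∫ ω, f ω ∂μ = 0) (hg0 : ∫ ω, g ω ∂μ = 0) (x y : ℝ) :
    ∫ ω, (x + f ω) * (y + g ω) ∂μ = x * y + ∫ ω, f ω * g ω ∂μ := by
  have hfg : Integrable (fun ω => f ω * g ω) μ := hf.integrable_mul hg
  have hf1 := hf.integrable one_le_two
  have hg1 := hg.integrable one_le_two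
  have hlin : Integrable (fun ω => x * g ω + y * f ω) μ := (hg1.const_mul x).add (hf1.const_mul y)
  have hconst_lin : Integrable (fun ω => x * y + (x * g ω + y * f ω)) μ :=
    (integrable_const _).add hlin
  calc ∫ ω, (x + f ω) * (y + g ω) ∂μ
      = ∫ ω, (x * y + (x * g ω + y * f ω)) + f ω * g ω ∂μ := by congr with ω; ring
    _ = x * y + ∫ ω, f ω * g ω ∂μ := by
      rw [integral_add hconst_lin hfg, integral_add (integrable_const _) hlin,
        integral_add (hg1.const_mul x) (hf1.const_mul y)]
      simp [integral_const_mul, hf0, hg0]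

variable {n : Type*} [Fintype n]

theorem integral_add_dotProduct_mulVec_add (M : Matrix n n ℝ) {z w : Ω → n → ℝ}
    (hz : ∀ a, MemLp (fun ω => z ω a) 2 μ) (hw : ∀ a, MemLp (fun ω => w ω a) 2 μ)
    (hz0 : ∀ a, ∫ ω, z ω a ∂μ = 0) (hw0 : ∀ a, ∫ ω, w ω a ∂μ = 0) (x y : n → ℝ) :
    ∫ ω, (x + z ω) ⬝ᵥ (M *ᵥ (y + w ω)) ∂μ =
      x ⬝ᵥ (M *ᵥ y) + ∑ a, ∑ b, M a b * ∫ ω, z ω a * w ω b ∂μ := by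
  have hint : ∀ a b, Integrable (fun ω => (x a + z ω a) * (y b + w ω b)) μ := fun a b =>
    ((memLp_const (x a)).add (hz a)).integrable_mul ((memLp_const (y b)).add (hw b))
  simp_rw [dotProduct_mulVec_eq_sum_sum, Pi.add_apply]
  rw [integral_finsetSum (f := fun a ω => ∑ b, M a b * ((x a + z ω a) * (y b + w ω b))) _
    fun a _ => integrable_finsetSum _ fun b _ => (hint a b).const_mul _]
  simp_rw [integral_finsetSum _ fun b _ => (hint _ b).const_mul _, integral_const_mul,
    integral_add_mul_add (hz _) (hw _) (hz0 _) (hw0 _), mul_add, Finset.sum_add_distrib]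

end Expectation

namespace PSAR

theorem Omat_isSymm {N : ℕ} (W : Matrix (Fin N) (Fin N) ℝ) (lam2 ρ σ2 : ℝ) :
    (Omat W lam2 ρ σ2).IsSymm := by
  simp [Omat, Matrix.IsSymm, transpose_add, transpose_smul, transpose_mul]

theorem deriv_deriv_nll {N p1 p2 : ℕ} (W : Matrix (Fin N) (Fin N) ℝ) (lam2 : ℝ)
    (X : Matrix (Fin N) (Fin p1 ⊕ Fin p2) ℝ) (Ys : Fin N → ℝ) (ρ : ℝ)
    (β d e : Fin p1 ⊕ Fin p2 → ℝ) (σ2 : ℝ) :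
    deriv (fun t : ℝ => deriv (fun u : ℝ => nll W lam2 X Ys ρ (β + t • d + u • e) σ2) 0) 0 =
      (X *ᵥ d) ⬝ᵥ ((Omat W lam2 ρ σ2)⁻¹ *ᵥ (X *ᵥ e)) := by
  have hres : ∀ t u : ℝ, Smat W ρ *ᵥ Ys - X *ᵥ (β + t • d + u • e) =
      Smat W ρ *ᵥ Ys - X *ᵥ β - t • (X *ᵥ d) - u • (X *ᵥ e) := by
    intro t u
    simp only [mulVec_add, mulVec_smul]
    abel
  simp only [nll, hres, deriv_const_add', deriv_const_mul_field']
  rw [deriv_deriv_dotProduct_mulVec_sub_smul,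
    (Omat_isSymm W lam2 ρ σ2).inv.dotProduct_mulVec_comm (X *ᵥ e)]
  ring

def covariateNoise {N p1 p2 : ℕ} (Ex : Fin N → Fin p2 → ℝ) : Matrix (Fin N) (Fin p1 ⊕ Fin p2) ℝ :=
  Matrix.of fun i j => Sum.elim (fun _ => (0 : ℝ)) (fun k => Ex i k) j

theorem Xobs_eq_add {N p1 p2 : ℕ} (X : Matrix (Fin N) (Fin p1 ⊕ Fin p2) ℝ)
    (Ex : Fin N → Fin p2 → ℝ) : Xobs X Ex = X + covariateNoise Ex :=
  rfl

section Noise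

variable {Ωs : Type*} [MeasurableSpace Ωs] {μ : Measure Ωs} {N p1 p2 : ℕ}
  {E ε : Ωs → Fin N → ℝ} {Ex : Ωs → Fin N → Fin p2 → ℝ}

theorem memLp_covariateNoise [IsFiniteMeasure μ] (hmom : ∀ z, MemLp (noiseFam E ε Ex z) 4 μ)
    (a : Fin N) (l : Fin p1 ⊕ Fin p2) : MemLp (fun ω => covariateNoise (Ex ω) a l) 2 μ := by
  cases l with
  | inl _ => exact MemLp.zero'
  | inr k => exact (hmom (.inr (.inr (a, k)))).mono_exponent (by norm_num)

theorem integral_covariateNoise (hmean : ∀ z, ∫ ω, noiseFam E ε Ex z ω ∂μ = 0) (a : Fin N)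
    (l : Fin p1 ⊕ Fin p2) : ∫ ω, covariateNoise (Ex ω) a l ∂μ = 0 := by
  cases l with
  | inl _ => simp [covariateNoise]
  | inr k => exact hmean (.inr (.inr (a, k)))

theorem integral_Ex_mul_Ex (hindep : iIndepFun (noiseFam E ε Ex) μ)
    (hmom : ∀ z, MemLp (noiseFam E ε Ex z) 4 μ)
    (hmean : ∀ z, ∫ ω, noiseFam E ε Ex z ω ∂μ = 0)
    {lamx2 : ℝ} (hExvar : ∀ i j, ∫ ω, (Ex ω i j) ^ 2 ∂μ = lamx2) (a b : Fin N) (j k : Fin p2) :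
    ∫ ω, Ex ω a j * Ex ω b k ∂μ = if (a, j) = (b, k) then lamx2 else 0 := by
  split_ifs with h
  · obtain ⟨rfl, rfl⟩ := Prod.ext_iff.1 h
    simpa [sq] using hExvar a j
  · have hne : (.inr (.inr (a, j)) : Fin N ⊕ Fin N ⊕ Fin N × Fin p2) ≠ .inr (.inr (b, k)) := by
      simpa using h
    have hfactor := (hindep.indepFun hne).integral_fun_mul_eq_mul_integral
      (hmom _).aestronglyMeasurable (hmom _).aestronglyMeasurable
    have hj : ∫ ω, Ex ω a j ∂μ = 0 := hmean (.inr (.inr (a, j)))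
    have hk : ∫ ω, Ex ω b k ∂μ = 0 := hmean (.inr (.inr (b, k)))
    simpa [noiseFam, hj, hk] using hfactor

theorem integral_covariateNoise_mul (hindep : iIndepFun (noiseFam E ε Ex) μ)
    (hmom : ∀ z, MemLp (noiseFam E ε Ex z) 4 μ)
    (hmean : ∀ z, ∫ ω, noiseFam E ε Ex z ω ∂μ = 0)
    {lamx2 : ℝ} (hExvar : ∀ i j, ∫ ω, (Ex ω i j) ^ 2 ∂μ = lamx2) (a b : Fin N)
    (l l' : Fin p1 ⊕ Fin p2) :
    ∫ ω, covariateNoise (Ex ω) a l * covariateNoise (Ex ω) b l' ∂μ =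
      if a = b then (fromBlocks 0 0 0 (lamx2 • 1) : Matrix (Fin p1 ⊕ Fin p2) _ ℝ) l l' else 0 := by
  cases l <;> cases l' <;> simp [covariateNoise, integral_Ex_mul_Ex hindep hmom hmean hExvar,
    one_apply, ite_and]

end Noise

theorem statement_4_general
    {Ωs : Type*} [MeasurableSpace Ωs] (μ : Measure Ωs) [IsProbabilityMeasure μ]
    (N p1 p2 : ℕ)
    (W : Matrix (Fin N) (Fin N) ℝ)
    (X : Matrix (Fin N) (Fin p1 ⊕ Fin p2) ℝ)
    (ρ0 : ℝ) (β0 : Fin p1 ⊕ Fin p2 → ℝ) (σ02 lam2 lamx2 : ℝ)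
    (E ε : Ωs → Fin N → ℝ) (Ex : Ωs → Fin N → Fin p2 → ℝ)
    (hindep : iIndepFun (noiseFam E ε Ex) μ)
    (hmom : ∀ z, MemLp (noiseFam E ε Ex z) 4 μ)
    (hmean : ∀ z, ∫ ω, noiseFam E ε Ex z ω ∂μ = 0)
    (hExvar : ∀ i j, ∫ ω, (Ex ω i j) ^ 2 ∂μ = lamx2) :
    ∀ j k : Fin p1 ⊕ Fin p2,
      (∫ ω, deriv (fun t : ℝ => deriv (fun u : ℝ =>
            nll W lam2 (Xobs X (Ex ω)) (Yobs W ρ0 X β0 (E ω) (ε ω)) ρ0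
              (β0 + t • (Pi.single j 1 : (Fin p1 ⊕ Fin p2) → ℝ) + u • (Pi.single k 1 : (Fin p1 ⊕ Fin p2) → ℝ)) σ02) 0) 0 ∂μ)
        - (∫ ω, deriv (fun t : ℝ => deriv (fun u : ℝ =>
            nll W lam2 X (Yobs W ρ0 X β0 (E ω) (ε ω)) ρ0
              (β0 + t • (Pi.single j 1 : (Fin p1 ⊕ Fin p2) → ℝ) + u • (Pi.single k 1 : (Fin p1 ⊕ Fin p2) → ℝ)) σ02) 0) 0 ∂μ)
        = (Matrix.fromBlocks 0 0 0
            ((lamx2 * Matrix.trace (Omat W lam2 ρ0 σ02)⁻¹) • (1 : Matrix (Fin p2) (Fin p2) ℝ)) :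
            Matrix (Fin p1 ⊕ Fin p2) (Fin p1 ⊕ Fin p2) ℝ) j k
  := by
  intro j k
  simp only [deriv_deriv_nll, Xobs_eq_add, add_mulVec]
  simp only [mulVec_single_one, col_apply', integral_const, probReal_univ, one_smul]
  rw [integral_add_dotProduct_mulVec_add _ (fun a => memLp_covariateNoise hmom a j)
    (fun a => memLp_covariateNoise hmom a k) (fun a => integral_covariateNoise hmean a j)
    (fun a => integral_covariateNoise hmean a k)]
  simp only [integral_covariateNoise_mul hindep hmom hmean hExvar, mul_ite, mul_zero,
    Finset.sum_ite_eq, Finset.mem_univ, if_true, add_sub_cancel_left, ← Finset.sum_mul]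
  cases j <;> cases k <;> simp [trace, one_apply, mul_comm]

theorem statement_4
    {Ωs : Type*} [MeasurableSpace Ωs] (μ : Measure Ωs) [IsProbabilityMeasure μ]
    (N p1 p2 : ℕ) (hN : 0 < N) (hp1 : 0 < p1) (hp2 : 0 < p2)
    (W : Matrix (Fin N) (Fin N) ℝ) (hW : ∀ i, W i i = 0)
    (X : Matrix (Fin N) (Fin p1 ⊕ Fin p2) ℝ)
    (ρ0 : ℝ) (β0 : Fin p1 ⊕ Fin p2 → ℝ) (σ02 lam2 lamx2 : ℝ)
    (hσ : 0 < σ02) (hlam : 0 < lam2) (hlamx : 0 < lamx2)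
    (hS0 : 0 < (Smat W ρ0).det)
    (E ε : Ωs → Fin N → ℝ) (Ex : Ωs → Fin N → Fin p2 → ℝ)
    (hindep : iIndepFun (noiseFam E ε Ex) μ)
    (hmom : ∀ z, MemLp (noiseFam E ε Ex z) 4 μ)
    (hmean : ∀ z, ∫ ω, noiseFam E ε Ex z ω ∂μ = 0)
    (hEvar : ∀ i, ∫ ω, (E ω i) ^ 2 ∂μ = σ02)
    (hepsvar : ∀ i, ∫ ω, (ε ω i) ^ 2 ∂μ = lam2)
    (hExvar : ∀ i j, ∫ ω, (Ex ω i j) ^ 2 ∂μ = lamx2) :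
    ∀ j k : Fin p1 ⊕ Fin p2,
      (∫ ω, deriv (fun t : ℝ => deriv (fun u : ℝ =>
            nll W lam2 (Xobs X (Ex ω)) (Yobs W ρ0 X β0 (E ω) (ε ω)) ρ0
              (β0 + t • (Pi.single j 1 : (Fin p1 ⊕ Fin p2) → ℝ) + u • (Pi.single k 1 : (Fin p1 ⊕ Fin p2) → ℝ)) σ02) 0) 0 ∂μ)
        - (∫ ω, deriv (fun t : ℝ => deriv (fun u : ℝ =>
            nll W lam2 X (Yobs W ρ0 X β0 (E ω) (ε ω)) ρ0
              (β0 + t • (Pi.single j 1 : (Fin p1 ⊕ Fin p2) → ℝ) + u • (Pi.single k 1 : (Fin p1 ⊕ Fin p2) → ℝ)) σ02) 0) 0 ∂μ)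
        = (Matrix.fromBlocks 0 0 0
            ((lamx2 * Matrix.trace (Omat W lam2 ρ0 σ02)⁻¹) • (1 : Matrix (Fin p2) (Fin p2) ℝ)) :
            Matrix (Fin p1 ⊕ Fin p2) (Fin p1 ⊕ Fin p2) ℝ) j k :=
  statement_4_general μ N p1 p2 W X ρ0 β0 σ02 lam2 lamx2 E ε Ex hindep hmom hmean hExvar

end PSAR
end
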